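/- The affine Weyl group W̃_A is a normal subgroup of the extended affine Weyl group W̃_A^ext, and the quotient group W̃_A^ext / W̃_A is cyclic, generated by the image of t_δ; equivalently, W̃_A^ext = ⋃_{n ∈ ℤ} W̃_A · t_δⁿ. -/

import Mathlib

namespace AffineGRS

noncomputable section

/-- The vertex set `Ṽ_A` of the affine Coxeter--Dynkin diagram attached to a
triple `A = (a 0, a 1, a 2)`: it consists of `𝟙*`, `𝟙` and the branch vertices
`(i, j)` for `i ∈ {1,2,3}` and `1 ≤ j ≤ a i − 1` (coded by `Fin (a i - 1)`). -/
inductive Vt (a : Fin 3 → ℕ) : Type where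
  | star : Vt a
  | one  : Vt a
  | br   : (i : Fin 3) → Fin (a i - 1) → Vt a

def vtEquiv (a : Fin 3 → ℕ) : Vt a ≃ (Unit ⊕ Unit ⊕ (Σ i : Fin 3, Fin (a i - 1))) where
  toFun v :=
    match v with
    | Vt.star => Sum.inl ()
    | Vt.one => Sum.inr (Sum.inl ())
    | Vt.br i j => Sum.inr (Sum.inr ⟨i, j⟩)
  invFun x :=
    match x with
    | Sum.inl _ => Vt.star
    | Sum.inr (Sum.inl _) => Vt.one
    | Sum.inr (Sum.inr ⟨i, j⟩) => Vt.br i j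
  left_inv v := by cases v <;> rfl
  right_inv x := by rcases x with _ | (_ | ⟨i, j⟩) <;> rfl

instance (a : Fin 3 → ℕ) : DecidableEq (Vt a) := (vtEquiv a).decidableEq
instance (a : Fin 3 → ℕ) : Fintype (Vt a) := Fintype.ofEquiv _ (vtEquiv a).symm

/-- The entries `Ĩ(α_u, α_v)` of the Cartan form on the basis `{α_v : v ∈ Ṽ_A}`. -/
def cartan (a : Fin 3 → ℕ) : Vt a → Vt a → ℤ
  | Vt.star, Vt.star => 2
  | Vt.one, Vt.one => 2
  | Vt.star, Vt.one => 2
  | Vt.one, Vt.star => 2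
  | Vt.star, Vt.br _ j => if (j : ℕ) = 0 then -1 else 0
  | Vt.br _ j, Vt.star => if (j : ℕ) = 0 then -1 else 0
  | Vt.one, Vt.br _ j => if (j : ℕ) = 0 then -1 else 0
  | Vt.br _ j, Vt.one => if (j : ℕ) = 0 then -1 else 0
  | Vt.br i j, Vt.br i' j' =>
      if i = i' ∧ ((j : ℕ) = (j' : ℕ) + 1 ∨ (j' : ℕ) = (j : ℕ) + 1) then -1
      else if i = i' ∧ (j : ℕ) = (j' : ℕ) then 2 else 0

/-- The root lattice `L̃`: the free `ℤ`-module with basis `{α_v : v ∈ Ṽ_A}`. -/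
abbrev Lt (a : Fin 3 → ℕ) : Type := Vt a →₀ ℤ

/-- The basis vector `α_v ∈ L̃`. -/
def gen (a : Fin 3 → ℕ) (v : Vt a) : Lt a := Finsupp.single v 1

/-- The symmetric bilinear form `Ĩ` on `L̃`. -/
def Iform (a : Fin 3 → ℕ) (x y : Lt a) : ℤ :=
  x.sum fun u xu => y.sum fun v yv => xu * yv * cartan a u v

/-- `δ := α_{𝟙*} − α_𝟙`. -/
def delta (a : Fin 3 → ℕ) : Lt a := gen a Vt.star - gen a Vt.one

/-- The reflection `r_α(x) = x − Ĩ(α, x) α` (for `α` with `Ĩ(α,α) = 2`). -/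
def reflect (a : Fin 3 → ℕ) (α : Lt a) (x : Lt a) : Lt a := x - Iform a α x • α

/-- The composite `r_{α_{(i,1)}} ∘ r_{α_{(i,2)}} ∘ ⋯ ∘ r_{α_{(i, a i − 1)}}`. -/
def branchComp (a : Fin 3 → ℕ) (i : Fin 3) : Lt a → Lt a :=
  (List.finRange (a i - 1)).foldr (fun j f => reflect a (gen a (Vt.br i j)) ∘ f) id

/-- The Coxeter transformation
`c̃_A := r_{α_{𝟙*}} ∘ r_{α_𝟙} ∘ r_{α_{(1,1)}} ∘ ⋯ ∘ r_{α_{(3, a₃ − 1)}}`. -/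
def coxeter (a : Fin 3 → ℕ) : Lt a → Lt a :=
  reflect a (gen a Vt.star) ∘ reflect a (gen a Vt.one) ∘
    branchComp a 0 ∘ branchComp a 1 ∘ branchComp a 2

/-- A `ℤ`-bilinear form `χ` on `L̃` is an Euler form for `(L̃, Ĩ, c̃_A)` if
`Ĩ = χ + χᵀ` and `χ(λ, λ') = −χ(λ', c̃_A(λ))` (Serre duality). -/
def IsEulerForm (a : Fin 3 → ℕ) (χ : Lt a →ₗ[ℤ] Lt a →ₗ[ℤ] ℤ) : Prop :=
  (∀ x y : Lt a, Iform a x y = χ x y + χ y x) ∧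
  (∀ x y : Lt a, χ x y = - χ y (coxeter a x))

/-- The twist automorphism `t_δ(λ) = λ − χ(δ, λ) δ` (as a function). -/
def twist (a : Fin 3 → ℕ) (χ : Lt a →ₗ[ℤ] Lt a →ₗ[ℤ] ℤ) (x : Lt a) : Lt a :=
  x - χ (delta a) x • delta a

/-- The inverse of the twist automorphism, `λ ↦ λ + χ(δ, λ) δ`. -/
def twistInv (a : Fin 3 → ℕ) (χ : Lt a →ₗ[ℤ] Lt a →ₗ[ℤ] ℤ) (x : Lt a) : Lt a :=
  x + χ (delta a) x • delta a

/-- The simple reflections `r_{α_v}`, viewed as the set of `ℤ`-linear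
automorphisms of `L̃` whose underlying function is `reflect a (gen a v)`. -/
def weylGens (a : Fin 3 → ℕ) : Set (Lt a ≃ₗ[ℤ] Lt a) :=
  { g | ∃ v : Vt a, ∀ x : Lt a, g x = reflect a (gen a v) x }

/-- The affine Weyl group `W̃_A`, generated by the simple reflections. -/
def weyl (a : Fin 3 → ℕ) : Subgroup (Lt a ≃ₗ[ℤ] Lt a) := Subgroup.closure (weylGens a)

/-- The set of real roots `Δ̃_re = {w(α_v) : w ∈ W̃_A, v ∈ Ṽ_A}`. -/
def realRoots (a : Fin 3 → ℕ) : Set (Lt a) :=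
  { x | ∃ w ∈ weyl a, ∃ v : Vt a, x = w (gen a v) }

/-- The extended affine Weyl group `W̃_A^ext`, generated by `W̃_A` and `t_δ`. -/
def extWeyl (a : Fin 3 → ℕ) (χ : Lt a →ₗ[ℤ] Lt a →ₗ[ℤ] ℤ) :
    Subgroup (Lt a ≃ₗ[ℤ] Lt a) :=
  Subgroup.closure (weylGens a ∪ { g | ∀ x : Lt a, g x = twist a χ x })

/-!
Since `δ` spans the radical of `Ĩ`, every map `x ↦ x + f(x) δ` with `f(δ) = 0` is an isometry
fixing `δ`; the twist `t_δ` and the translations `T_β(x) = x + Ĩ(β, x) δ` are of this kind.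
Conjugating `r_{α_v}` by such a transvection gives the reflection in `α_v + f(α_v) δ`, which is
`T_{f(α_v) α_v} ∘ r_{α_v}`. So `t_δ` normalises `W̃_A` once every `T_β` lies in `W̃_A`. Now
`β ↦ T_β` is additive, `T_{α_𝟙*} = r_{α_𝟙*} r_{α_𝟙}` and `r_{α_v} T_β r_{α_v} = T_{r_{α_v} β}`;
as `r_{α_v} β = β + α_v` when `Ĩ(α_v, β) = -1`, walking along the (connected) diagram puts every
`α_v` into the lattice of such `β`. Finally `W̃_A^ext = W̃_A ⊔ ⟨t_δ⟩ = W̃_A · ⟨t_δ⟩`.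
-/

theorem _root_.LinearEquiv.transvection_zpow {R V : Type*} [Ring R] [AddCommGroup V]
    [Module R V] {f : Module.Dual R V} {v : V} (h : f v = 0) (n : ℤ) :
    LinearEquiv.transvection h ^ n =
      LinearEquiv.transvection (f := n • f) (v := v) (by simp [h]) := by
  induction n using Int.induction_on with
  | zero => ext; simp
  | succ n ih =>
    rw [zpow_add_one, ih]
    ext x
    simp [LinearMap.transvection.apply, h, add_smul, mul_smul, add_assoc, add_comm]
  | pred n ih =>
    rw [zpow_sub_one, ih, LinearEquiv.transvection.inv_eq' h (by simp [h])]
    ext x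
    simp [LinearMap.transvection.apply, h, mul_smul, sub_eq_add_neg, add_smul, neg_smul,
      add_assoc, add_comm]

section CartanForm

variable {a : Fin 3 → ℕ}

lemma cartan_symm (u v : Vt a) : cartan a u v = cartan a v u := by
  cases u <;> cases v <;> simp only [cartan]
  rename_i i j i' j'
  by_cases hi : i = i'
  · subst hi
    simp only [true_and]
    split_ifs <;> omega
  · rw [if_neg (by tauto), if_neg (by tauto), if_neg (by tauto), if_neg (by tauto)]

lemma cartan_self (v : Vt a) : cartan a v v = 2 := by
  cases v <;> simp [cartan]

lemma cartan_star_left (u : Vt a) : cartan a Vt.star u = cartan a Vt.one u := by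
  cases u <;> simp [cartan]

lemma Iform_eq_sum (x y : Lt a) :
    Iform a x y = ∑ u, ∑ v, x u * y v * cartan a u v := by
  rw [Iform, Finsupp.sum_fintype _ _ (by simp)]
  exact Finset.sum_congr rfl fun u _ => Finsupp.sum_fintype _ _ (by simp)

def cartanForm (a : Fin 3 → ℕ) : LinearMap.BilinForm ℤ (Lt a) :=
  LinearMap.mk₂ ℤ (Iform a)
    (fun x y z => by
      simp only [Iform_eq_sum, Finsupp.add_apply, add_mul, Finset.sum_add_distrib])
    (fun c x z => by
      simp only [Iform_eq_sum, Finsupp.smul_apply, smul_eq_mul, Finset.mul_sum, mul_assoc])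
    (fun x y z => by
      simp only [Iform_eq_sum, Finsupp.add_apply, mul_add, add_mul, Finset.sum_add_distrib])
    (fun c x z => by
      simp only [Iform_eq_sum, Finsupp.smul_apply, smul_eq_mul, Finset.mul_sum]
      exact Finset.sum_congr rfl fun u _ => Finset.sum_congr rfl fun v _ => by ring)

lemma cartanForm_apply (x y : Lt a) : cartanForm a x y = Iform a x y := rfl

lemma cartanForm_comm (x y : Lt a) : cartanForm a x y = cartanForm a y x := by
  rw [cartanForm_apply, cartanForm_apply, Iform_eq_sum, Iform_eq_sum, Finset.sum_comm]
  exact Finset.sum_congr rfl fun u _ => Finset.sum_congr rfl fun v _ => by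
    rw [cartan_symm]; ring

lemma cartanForm_single (u v : Vt a) (r s : ℤ) :
    cartanForm a (Finsupp.single u r) (Finsupp.single v s) = r * s * cartan a u v := by
  rw [cartanForm_apply, Iform, Finsupp.sum_single_index (by simp),
    Finsupp.sum_single_index (by simp)]

lemma cartanForm_gen_gen (u v : Vt a) : cartanForm a (gen a u) (gen a v) = cartan a u v := by
  simp [gen, cartanForm_single]

lemma cartanForm_delta : cartanForm a (delta a) = 0 :=
  Finsupp.lhom_ext fun u r => by
    simp [delta, gen, cartanForm_single, cartan_star_left]

lemma cartanForm_apply_delta (x : Lt a) : cartanForm a x (delta a) = 0 := by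
  rw [cartanForm_comm, cartanForm_delta, LinearMap.zero_apply]

lemma cartanForm_gen_one : cartanForm a (gen a Vt.one) = cartanForm a (gen a Vt.star) := by
  rw [← sub_eq_zero, ← map_sub, ← neg_sub, map_neg, ← delta, cartanForm_delta, neg_zero]

end CartanForm

section SimpleReflections

variable {a : Fin 3 → ℕ}

def simpleRefl (a : Fin 3 → ℕ) (v : Vt a) : Lt a ≃ₗ[ℤ] Lt a :=
  Module.reflection (f := cartanForm a (gen a v)) (x := gen a v) <| by
    rw [cartanForm_gen_gen, cartan_self]

lemma simpleRefl_apply (v : Vt a) (x : Lt a) :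
    simpleRefl a v x = x - cartanForm a (gen a v) x • gen a v := rfl

lemma simpleRefl_apply_simpleRefl (v : Vt a) (x : Lt a) :
    simpleRefl a v (simpleRefl a v x) = x :=
  Module.involutive_reflection _ x

lemma simpleRefl_mem_weyl (v : Vt a) : simpleRefl a v ∈ weyl a :=
  Subgroup.subset_closure ⟨v, fun _ => rfl⟩

lemma exists_eq_simpleRefl {g : Lt a ≃ₗ[ℤ] Lt a} (hg : g ∈ weylGens a) :
    ∃ v, g = simpleRefl a v :=
  let ⟨v, hv⟩ := hg
  ⟨v, LinearEquiv.ext hv⟩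

lemma simpleRefl_delta (v : Vt a) : simpleRefl a v (delta a) = delta a := by
  rw [simpleRefl_apply, cartanForm_apply_delta, zero_smul, sub_zero]

lemma cartanForm_simpleRefl (v : Vt a) (x y : Lt a) :
    cartanForm a (simpleRefl a v x) y = cartanForm a x (simpleRefl a v y) := by
  simp only [simpleRefl_apply, map_sub, map_smul, LinearMap.sub_apply, LinearMap.smul_apply,
    smul_eq_mul, cartanForm_comm (gen a v) x, cartanForm_comm (gen a v) y]
  ring

end SimpleReflections

section Translations

variable {a : Fin 3 → ℕ}

def translation (a : Fin 3 → ℕ) (β : Lt a) : Lt a ≃ₗ[ℤ] Lt a :=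
  LinearEquiv.transvection (cartanForm_apply_delta β)

lemma translation_apply (β x : Lt a) :
    translation a β x = x + cartanForm a β x • delta a := rfl

lemma translation_add (β γ : Lt a) :
    translation a (β + γ) = translation a β * translation a γ := by
  refine LinearEquiv.ext fun x => ?_
  rw [LinearEquiv.mul_apply, translation_apply, translation_apply, translation_apply, map_add,
    map_add, map_smul, cartanForm_apply_delta, smul_zero, add_zero, LinearMap.add_apply, add_smul,
    add_assoc, add_comm (_ • delta a)]

lemma translation_zero : translation a 0 = 1 :=
  LinearEquiv.ext fun x => by simp [translation_apply]

lemma translation_neg (β : Lt a) : translation a (-β) = (translation a β)⁻¹ := by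
  rw [eq_inv_iff_mul_eq_one, ← translation_add, neg_add_cancel, translation_zero]

lemma simpleRefl_mul_translation_mul_simpleRefl (v : Vt a) (β : Lt a) :
    simpleRefl a v * translation a β * simpleRefl a v = translation a (simpleRefl a v β) := by
  refine LinearEquiv.ext fun x => ?_
  simp only [LinearEquiv.mul_apply, translation_apply, map_add, map_smul, simpleRefl_delta,
    cartanForm_simpleRefl, simpleRefl_apply_simpleRefl]

def translationLattice (a : Fin 3 → ℕ) : AddSubgroup (Lt a) where
  carrier := {β | translation a β ∈ weyl a}
  add_mem' {β γ} hβ hγ := show translation a (β + γ) ∈ weyl a by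
    rw [translation_add]; exact mul_mem hβ hγ
  zero_mem' := show translation a 0 ∈ weyl a by rw [translation_zero]; exact one_mem _
  neg_mem' {β} hβ := show translation a (-β) ∈ weyl a by rw [translation_neg]; exact inv_mem hβ

lemma mem_translationLattice {β : Lt a} :
    β ∈ translationLattice a ↔ translation a β ∈ weyl a := by rfl

lemma simpleRefl_mem_translationLattice {v : Vt a} {β : Lt a}
    (hβ : β ∈ translationLattice a) : simpleRefl a v β ∈ translationLattice a := by
  rw [mem_translationLattice, ← simpleRefl_mul_translation_mul_simpleRefl]
  exact mul_mem (mul_mem (simpleRefl_mem_weyl v) hβ) (simpleRefl_mem_weyl v)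

lemma gen_mem_translationLattice_of_adjacent {v : Vt a} {β : Lt a}
    (hβ : β ∈ translationLattice a) (hvβ : cartanForm a (gen a v) β = -1) :
    gen a v ∈ translationLattice a := by
  have : gen a v = simpleRefl a v β - β := by
    rw [simpleRefl_apply, hvβ]; abel
  rw [this]
  exact sub_mem (simpleRefl_mem_translationLattice hβ) hβ

lemma translation_gen_star :
    translation a (gen a Vt.star) = simpleRefl a Vt.star * simpleRefl a Vt.one := by
  refine LinearEquiv.ext fun x => ?_
  simp only [LinearEquiv.mul_apply, translation_apply, simpleRefl_apply, cartanForm_gen_one,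
    map_sub, map_smul, cartanForm_gen_gen, delta, show cartan a Vt.star Vt.one = 2 from rfl]
  module

lemma gen_star_mem_translationLattice : gen a Vt.star ∈ translationLattice a := by
  rw [mem_translationLattice, translation_gen_star]
  exact mul_mem (simpleRefl_mem_weyl _) (simpleRefl_mem_weyl _)

lemma gen_one_mem_translationLattice : gen a Vt.one ∈ translationLattice a := by
  have : translation a (gen a Vt.one) = translation a (gen a Vt.star) :=
    LinearEquiv.ext fun x => by rw [translation_apply, translation_apply, cartanForm_gen_one]
  rw [mem_translationLattice, this]
  exact gen_star_mem_translationLattice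

lemma gen_br_mem_translationLattice (i : Fin 3) :
    ∀ (j : ℕ) (hj : j < a i - 1), gen a (Vt.br i ⟨j, hj⟩) ∈ translationLattice a
  | 0, _ => gen_mem_translationLattice_of_adjacent gen_star_mem_translationLattice <| by
      simp [cartanForm_gen_gen, cartan]
  | j + 1, hj => gen_mem_translationLattice_of_adjacent
      (gen_br_mem_translationLattice i j (by omega)) <| by
        simp [cartanForm_gen_gen, cartan]

lemma gen_mem_translationLattice (v : Vt a) : gen a v ∈ translationLattice a := by
  cases v with
  | star => exact gen_star_mem_translationLattice
  | one => exact gen_one_mem_translationLattice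
  | br i j => exact gen_br_mem_translationLattice i j j.isLt

end Translations

section Transvections

variable {a : Fin 3 → ℕ}

lemma transvection_mul_simpleRefl_mul_inv {f : Module.Dual ℤ (Lt a)} (hf : f (delta a) = 0)
    (v : Vt a) :
    LinearEquiv.transvection hf * simpleRefl a v * (LinearEquiv.transvection hf)⁻¹
      = translation a (f (gen a v) • gen a v) * simpleRefl a v := by
  refine LinearEquiv.ext fun x => ?_
  rw [LinearEquiv.transvection.inv_eq hf (by simp [hf])]
  simp only [LinearEquiv.mul_apply, LinearEquiv.transvection.apply, translation_apply,
    simpleRefl_apply, map_add, map_sub, map_neg, map_smul, LinearMap.smul_apply, hf,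
    cartanForm_apply_delta, cartanForm_gen_gen, cartan_self, smul_eq_mul]
  module

lemma transvection_conj_mem_weyl {f : Module.Dual ℤ (Lt a)} (hf : f (delta a) = 0)
    {w : Lt a ≃ₗ[ℤ] Lt a} (hw : w ∈ weyl a) :
    LinearEquiv.transvection hf * w * (LinearEquiv.transvection hf)⁻¹ ∈ weyl a := by
  suffices weyl a ≤ (weyl a).comap (MulAut.conj (LinearEquiv.transvection hf)).toMonoidHom from
    this hw
  refine Subgroup.closure_le _ |>.mpr fun g hg => ?_
  obtain ⟨v, rfl⟩ := exists_eq_simpleRefl hg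
  show _ * _ * _ ∈ weyl a
  rw [transvection_mul_simpleRefl_mul_inv]
  exact mul_mem (zsmul_mem (gen_mem_translationLattice v) _) (simpleRefl_mem_weyl v)

lemma transvection_mem_normalizer_weyl {f : Module.Dual ℤ (Lt a)} (hf : f (delta a) = 0) :
    LinearEquiv.transvection hf ∈ Subgroup.normalizer (weyl a) := by
  refine Subgroup.mem_normalizer_iff.mpr fun w => ⟨transvection_conj_mem_weyl hf, fun hw => ?_⟩
  have hf' : (-f) (delta a) = 0 := by simp [hf]
  have := transvection_conj_mem_weyl hf' hw
  rwa [← LinearEquiv.transvection.inv_eq' hf hf', inv_inv, ← mul_assoc, ← mul_assoc,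
    inv_mul_cancel, one_mul, mul_assoc, inv_mul_cancel, mul_one] at this

end Transvections

section Twist

variable {a : Fin 3 → ℕ} {χ : Lt a →ₗ[ℤ] Lt a →ₗ[ℤ] ℤ}

lemma IsEulerForm.apply_delta_delta (hχ : IsEulerForm a χ) : χ (delta a) (delta a) = 0 := by
  have h := hχ.1 (delta a) (delta a)
  rw [← cartanForm_apply, cartanForm_apply_delta] at h
  omega

def twistEquiv (χ : Lt a →ₗ[ℤ] Lt a →ₗ[ℤ] ℤ) (h : χ (delta a) (delta a) = 0) :
    Lt a ≃ₗ[ℤ] Lt a :=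
  LinearEquiv.transvection (f := -χ (delta a)) (v := delta a) (by simp [h])

lemma twistEquiv_apply (h : χ (delta a) (delta a) = 0) (x : Lt a) :
    twistEquiv χ h x = twist a χ x := by
  rw [twistEquiv, LinearEquiv.transvection.apply, twist, LinearMap.neg_apply, neg_smul,
    sub_eq_add_neg]

lemma twistEquiv_zpow_apply (h : χ (delta a) (delta a) = 0) (n : ℤ) (x : Lt a) :
    (twistEquiv χ h ^ n) x = x - (n * χ (delta a) x) • delta a := by
  rw [twistEquiv, LinearEquiv.transvection_zpow, LinearEquiv.transvection.apply]
  simp [sub_eq_add_neg]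

lemma extWeyl_eq_sup (h : χ (delta a) (delta a) = 0) :
    extWeyl a χ = weyl a ⊔ Subgroup.zpowers (twistEquiv χ h) := by
  have : {g : Lt a ≃ₗ[ℤ] Lt a | ∀ x, g x = twist a χ x} = {twistEquiv χ h} :=
    Set.ext fun g => (forall_congr' fun x => by rw [twistEquiv_apply]).trans
      LinearEquiv.ext_iff.symm
  rw [extWeyl, Subgroup.closure_union, this, ← Subgroup.zpowers_eq_closure, weyl]

end Twist

theorem weyl_normal_in_extWeyl_general (a : Fin 3 → ℕ)
    (χ : Lt a →ₗ[ℤ] Lt a →ₗ[ℤ] ℤ) (hχ : IsEulerForm a χ) :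
    weyl a ≤ extWeyl a χ ∧
    (∀ g ∈ extWeyl a χ, ∀ w ∈ weyl a, g * w * g⁻¹ ∈ weyl a) ∧
    (∀ g : Lt a ≃ₗ[ℤ] Lt a, g ∈ extWeyl a χ ↔
      ∃ w ∈ weyl a, ∃ n : ℤ,
        ∀ x : Lt a, g x = w (x - (n * χ (delta a) x) • delta a)) := by
  have hδ := hχ.apply_delta_delta
  have ht : Subgroup.zpowers (twistEquiv χ hδ) ≤ Subgroup.normalizer (weyl a) :=
    Subgroup.zpowers_le.mpr (transvection_mem_normalizer_weyl _)
  rw [extWeyl_eq_sup hδ]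
  refine ⟨le_sup_left, fun g hg w hw => ?_, fun g => ?_⟩
  · exact (Subgroup.mem_normalizer_iff.mp (sup_le Subgroup.le_normalizer ht hg) w).mp hw
  rw [← SetLike.mem_coe, Subgroup.coe_mul_of_right_le_normalizer_left _ _ ht]
  constructor
  · rintro ⟨w, hw, _, ⟨n, rfl⟩, rfl⟩
    exact ⟨w, hw, n, fun x => by rw [LinearEquiv.mul_apply, twistEquiv_zpow_apply]⟩
  · rintro ⟨w, hw, n, hg⟩
    refine ⟨w, hw, _, ⟨n, rfl⟩, LinearEquiv.ext fun x => ?_⟩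
    rw [LinearEquiv.mul_apply, twistEquiv_zpow_apply, hg]

/-- **The short exact sequence `1 → W̃_A → W̃_A^ext → T_A → 1`** (Corollary
3.7 of the paper): the affine Weyl group `W̃_A` is a normal subgroup of the
extended affine Weyl group `W̃_A^ext = ⟨W̃_A, t_δ⟩`, and the quotient
`W̃_A^ext / W̃_A` is cyclic, generated by the image of `t_δ`; equivalently,
`W̃_A^ext = ⋃_{n ∈ ℤ} W̃_A · t_δⁿ`, i.e. `g ∈ W̃_A^ext` iff `g = w ∘ t_δⁿ`
for some `w ∈ W̃_A` and `n ∈ ℤ` (here `t_δⁿ(x) = x − n χ(δ,x) δ`). -/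
theorem weyl_normal_in_extWeyl (a : Fin 3 → ℕ) (ha : ∀ i, 0 < a i)
    (hA : 1 < (a 0 : ℚ)⁻¹ + (a 1 : ℚ)⁻¹ + (a 2 : ℚ)⁻¹)
    (χ : Lt a →ₗ[ℤ] Lt a →ₗ[ℤ] ℤ) (hχ : IsEulerForm a χ) :
    weyl a ≤ extWeyl a χ ∧
    (∀ g ∈ extWeyl a χ, ∀ w ∈ weyl a, g * w * g⁻¹ ∈ weyl a) ∧
    (∀ g : Lt a ≃ₗ[ℤ] Lt a, g ∈ extWeyl a χ ↔
      ∃ w ∈ weyl a, ∃ n : ℤ,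
        ∀ x : Lt a, g x = w (x - (n * χ (delta a) x) • delta a)) :=
  weyl_normal_in_extWeyl_general a χ hχ

end
end AffineGRS
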